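/- arXiv:2304.08045 — 2 statements merged into one kernel-verified Lean document; each statement's English description precedes it below -/
import Mathlib

section
/- Let (γ,v₁,v₂) and (γ̃,ṽ₁,ṽ₂) be pseudo-spherical spacelike framed curves on the same interval I with ⟨v₁,v₁⟩ = ⟨ṽ₁,ṽ₁⟩ and with the same curvature (α,ℓ,m,n). Then they are congruent: there exists a real 4×4 matrix A with AᵀηA = η, where η = diag(-1,-1,1,1), and det A = 1, such that γ̃(s) = A·γ(s), ṽ₁(s) = A·v₁(s) and ṽ₂(s) = A·v₂(s) for all s ∈ I. -/
noncomputable section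

/-- The index-2 pseudo-scalar product on `ℝ⁴₂`. -/
def pdot (u w : Fin 4 → ℝ) : ℝ :=
  -(u 0 * w 0) - u 1 * w 1 + u 2 * w 2 + u 3 * w 3

/-- 3×3 determinant. -/
def det3 (a b c d e f g h i : ℝ) : ℝ :=
  a * (e * i - f * h) - b * (d * i - f * g) + c * (d * h - e * g)

/-- The triple product `u×v×w` in `ℝ⁴₂`. -/
def tripleProd (u v w : Fin 4 → ℝ) : Fin 4 → ℝ :=
  ![ -det3 (u 1) (u 2) (u 3) (v 1) (v 2) (v 3) (w 1) (w 2) (w 3),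
      det3 (u 0) (u 2) (u 3) (v 0) (v 2) (v 3) (w 0) (w 2) (w 3),
      det3 (u 0) (u 1) (u 3) (v 0) (v 1) (v 3) (w 0) (w 1) (w 3),
     -det3 (u 0) (u 1) (u 2) (v 0) (v 1) (v 2) (w 0) (w 1) (w 2)]

/-- `μ(s) = γ(s)×v₁(s)×v₂(s)`. -/
def muOf (γ v₁ v₂ : ℝ → Fin 4 → ℝ) (s : ℝ) : Fin 4 → ℝ :=
  tripleProd (γ s) (v₁ s) (v₂ s)

/-- Pseudo-spherical spacelike framed curve on the open interval `I`. -/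
structure SpacelikeFramed (I : Set ℝ) (γ v₁ v₂ : ℝ → Fin 4 → ℝ) (ε : ℝ) : Prop where
  smooth_γ : ContDiffOn ℝ (⊤ : ℕ∞) γ I
  smooth_v₁ : ContDiffOn ℝ (⊤ : ℕ∞) v₁ I
  smooth_v₂ : ContDiffOn ℝ (⊤ : ℕ∞) v₂ I
  eps : ε = 1 ∨ ε = -1
  ads : ∀ s ∈ I, pdot (γ s) (γ s) = -1
  normv₁ : ∀ s ∈ I, pdot (v₁ s) (v₁ s) = ε
  normv₂ : ∀ s ∈ I, pdot (v₂ s) (v₂ s) = -ε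
  orth₁ : ∀ s ∈ I, pdot (γ s) (v₁ s) = 0
  orth₂ : ∀ s ∈ I, pdot (γ s) (v₂ s) = 0
  orth₃ : ∀ s ∈ I, pdot (v₁ s) (v₂ s) = 0
  tangent₁ : ∀ s ∈ I, pdot (deriv γ s) (v₁ s) = 0
  tangent₂ : ∀ s ∈ I, pdot (deriv γ s) (v₂ s) = 0

def scurvA (γ v₁ v₂ : ℝ → Fin 4 → ℝ) (s : ℝ) : ℝ := pdot (deriv γ s) (muOf γ v₁ v₂ s)
def scurvL (ε : ℝ) (v₁ v₂ : ℝ → Fin 4 → ℝ) (s : ℝ) : ℝ := -ε * pdot (deriv v₁ s) (v₂ s)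
def scurvM (γ v₁ v₂ : ℝ → Fin 4 → ℝ) (s : ℝ) : ℝ := pdot (deriv v₁ s) (muOf γ v₁ v₂ s)
def scurvN (γ v₁ v₂ : ℝ → Fin 4 → ℝ) (s : ℝ) : ℝ := pdot (deriv v₂ s) (muOf γ v₁ v₂ s)

/-- Pseudo-spherical timelike framed curve on the open interval `I`. -/
structure TimelikeFramed (I : Set ℝ) (γ v₁ v₂ : ℝ → Fin 4 → ℝ) : Prop where
  smooth_γ : ContDiffOn ℝ (⊤ : ℕ∞) γ I
  smooth_v₁ : ContDiffOn ℝ (⊤ : ℕ∞) v₁ I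
  smooth_v₂ : ContDiffOn ℝ (⊤ : ℕ∞) v₂ I
  ads : ∀ s ∈ I, pdot (γ s) (γ s) = -1
  normv₁ : ∀ s ∈ I, pdot (v₁ s) (v₁ s) = 1
  normv₂ : ∀ s ∈ I, pdot (v₂ s) (v₂ s) = 1
  orth₁ : ∀ s ∈ I, pdot (γ s) (v₁ s) = 0
  orth₂ : ∀ s ∈ I, pdot (γ s) (v₂ s) = 0
  orth₃ : ∀ s ∈ I, pdot (v₁ s) (v₂ s) = 0
  tangent₁ : ∀ s ∈ I, pdot (deriv γ s) (v₁ s) = 0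
  tangent₂ : ∀ s ∈ I, pdot (deriv γ s) (v₂ s) = 0

def tcurvA (γ v₁ v₂ : ℝ → Fin 4 → ℝ) (s : ℝ) : ℝ := -pdot (deriv γ s) (muOf γ v₁ v₂ s)
def tcurvL (v₁ v₂ : ℝ → Fin 4 → ℝ) (s : ℝ) : ℝ := pdot (deriv v₁ s) (v₂ s)
def tcurvM (γ v₁ v₂ : ℝ → Fin 4 → ℝ) (s : ℝ) : ℝ := -pdot (deriv v₁ s) (muOf γ v₁ v₂ s)
def tcurvN (γ v₁ v₂ : ℝ → Fin 4 → ℝ) (s : ℝ) : ℝ := -pdot (deriv v₂ s) (muOf γ v₁ v₂ s)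

/-- `g(s)` for the spacelike total evolute. -/
def sG (α ℓh nh : ℝ → ℝ) (εh : ℝ) (s : ℝ) : ℝ :=
  εh * (α s * deriv nh s - nh s * deriv α s) ^ 2
    - (ℓh s) ^ 2 * (nh s) ^ 2 * ((nh s) ^ 2 + εh * (α s) ^ 2)

/-- Total evolute (with the `+` sign) of a spacelike framed immersion with curvature
`(α, ℓ̂, 0, n̂)`. -/
def sEvolute (γ f₁ f₂ : ℝ → Fin 4 → ℝ) (α ℓh nh : ℝ → ℝ) (εh : ℝ) (s : ℝ) : Fin 4 → ℝ :=
  (Real.sqrt |sG α ℓh nh εh s|)⁻¹ •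
    ((ℓh s * nh s) • (nh s • γ s - α s • f₂ s)
      - (α s * deriv nh s - nh s * deriv α s) • f₁ s)

/-- `f(s)` for the timelike total evolute. -/
def tF (α ℓh nh : ℝ → ℝ) (s : ℝ) : ℝ :=
  (α s * deriv nh s - nh s * deriv α s) ^ 2
    - (ℓh s) ^ 2 * (nh s) ^ 2 * ((nh s) ^ 2 - (α s) ^ 2)

/-- Total evolute (with the `+` sign) of a timelike framed immersion with curvature
`(α, ℓ̂, 0, n̂)`. -/
def tEvolute (γ f₁ f₂ : ℝ → Fin 4 → ℝ) (α ℓh nh : ℝ → ℝ) (s : ℝ) : Fin 4 → ℝ :=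
  (Real.sqrt |tF α ℓh nh s|)⁻¹ •
    ((ℓh s * nh s) • (nh s • γ s - α s • f₂ s)
      - (α s * deriv nh s - nh s * deriv α s) • f₁ s)

set_option maxHeartbeats 1600000


def etaM : Matrix (Fin 4) (Fin 4) ℝ :=
  Matrix.of ![![-1,0,0,0],![0,-1,0,0],![0,0,1,0],![0,0,0,1]]
def gM (ε : ℝ) : Matrix (Fin 4) (Fin 4) ℝ :=
  Matrix.of ![![-1,0,0,0],![0,ε,0,0],![0,0,-ε,0],![0,0,0,1]]

lemma etaM_eq_diagonal : etaM = Matrix.diagonal ![(-1 : ℝ), -1, 1, 1] := by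
  ext i j; fin_cases i <;> fin_cases j <;>
    simp [etaM, Matrix.diagonal, Matrix.vecHead, Matrix.vecTail]

lemma etaM_mul_etaM : etaM * etaM = 1 := by
  ext i j; fin_cases i <;> fin_cases j <;>
    simp [etaM, Matrix.mul_apply, Fin.sum_univ_four, Matrix.one_apply,
      Matrix.vecHead, Matrix.vecTail]

lemma gM_mul_gM {ε : ℝ} (hε2 : ε * ε = 1) : gM ε * gM ε = 1 := by
  ext i j; fin_cases i <;> fin_cases j <;>
    simp [gM, Matrix.mul_apply, Fin.sum_univ_four, Matrix.one_apply,
      Matrix.vecHead, Matrix.vecTail, hε2]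

lemma etaM_transpose : etaM.transpose = etaM := by
  ext i j; fin_cases i <;> fin_cases j <;> simp [etaM, Matrix.vecHead, Matrix.vecTail]

lemma gM_transpose (ε : ℝ) : (gM ε).transpose = gM ε := by
  ext i j; fin_cases i <;> fin_cases j <;> simp [gM, Matrix.vecHead, Matrix.vecTail]

lemma etaM_det : etaM.det = 1 := by
  rw [etaM_eq_diagonal, Matrix.det_diagonal]
  simp [Fin.prod_univ_four]

lemma gM_det {ε : ℝ} (hε2 : ε * ε = 1) : (gM ε).det = 1 := by
  have : gM ε = Matrix.diagonal ![(-1 : ℝ), ε, -ε, 1] := by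
    ext i j; fin_cases i <;> fin_cases j <;>
      simp [gM, Matrix.diagonal, Matrix.vecHead, Matrix.vecTail]
  rw [this, Matrix.det_diagonal, Fin.prod_univ_four]
  simp [Matrix.vecHead, Matrix.vecTail]
  nlinarith [hε2]

section frame
variable {a b c m : Fin 4 → ℝ} {ε : ℝ}

lemma frame_gram (haa : pdot a a = -1) (hbb : pdot b b = ε) (hcc : pdot c c = -ε)
    (hab : pdot a b = 0) (hac : pdot a c = 0) (hbc : pdot b c = 0)
    (ham : pdot a m = 0) (hbm : pdot b m = 0) (hcm : pdot c m = 0) (hmm : pdot m m = 1) :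
    (Matrix.of ![a,b,c,m]) * etaM * (Matrix.of ![a,b,c,m]).transpose = gM ε := by
  simp only [pdot] at haa hbb hcc hab hac hbc ham hbm hcm hmm
  ext i j
  fin_cases i <;> fin_cases j <;>
    simp [etaM, gM, Matrix.mul_apply, Fin.sum_univ_four, Matrix.vecHead, Matrix.vecTail,
      show (Fin.succ 2 : Fin 4) = 3 from rfl, show (Fin.succ 1 : Fin 4) = 2 from rfl,
      show (Fin.succ 0 : Fin 4) = 1 from rfl] <;>
    first
      | linear_combination haa | linear_combination hbb | linear_combination hcc
      | linear_combination hab | linear_combination hac | linear_combination hbc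
      | linear_combination ham | linear_combination hbm | linear_combination hcm
      | linear_combination hmm
      | linear_combination -haa | linear_combination -hbb | linear_combination -hcc
      | linear_combination -hab | linear_combination -hac | linear_combination -hbc
      | linear_combination -ham | linear_combination -hbm | linear_combination -hcm

lemma frame_gram' (hε2 : ε * ε = 1)
    (haa : pdot a a = -1) (hbb : pdot b b = ε) (hcc : pdot c c = -ε)
    (hab : pdot a b = 0) (hac : pdot a c = 0) (hbc : pdot b c = 0)
    (ham : pdot a m = 0) (hbm : pdot b m = 0) (hcm : pdot c m = 0) (hmm : pdot m m = 1) :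
    (Matrix.of ![a,b,c,m]).transpose * gM ε * (Matrix.of ![a,b,c,m]) = etaM := by
  set R := Matrix.of ![a,b,c,m] with hR
  have h1 : R * etaM * R.transpose = gM ε :=
    frame_gram haa hbb hcc hab hac hbc ham hbm hcm hmm
  have h2 : R * (etaM * R.transpose * gM ε) = 1 := by
    calc R * (etaM * R.transpose * gM ε) = (R * etaM * R.transpose) * gM ε := by
          simp only [Matrix.mul_assoc]
      _ = gM ε * gM ε := by rw [h1]
      _ = 1 := gM_mul_gM hε2
  have h3 : (etaM * R.transpose * gM ε) * R = 1 := mul_eq_one_comm.mp h2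
  have h4 : etaM * (R.transpose * gM ε * R) = 1 := by
    rw [← Matrix.mul_assoc, ← Matrix.mul_assoc]; exact h3
  calc R.transpose * gM ε * R = (etaM * etaM) * (R.transpose * gM ε * R) := by
        rw [etaM_mul_etaM, Matrix.one_mul]
    _ = etaM * (etaM * (R.transpose * gM ε * R)) := by rw [Matrix.mul_assoc]
    _ = etaM := by rw [h4, Matrix.mul_one]

/-- Injectivity of the map `x ↦ (⟨a,x⟩,⟨b,x⟩,⟨c,x⟩,⟨m,x⟩)`. -/
lemma frame_inj (hε2 : ε * ε = 1)
    (haa : pdot a a = -1) (hbb : pdot b b = ε) (hcc : pdot c c = -ε)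
    (hab : pdot a b = 0) (hac : pdot a c = 0) (hbc : pdot b c = 0)
    (ham : pdot a m = 0) (hbm : pdot b m = 0) (hcm : pdot c m = 0) (hmm : pdot m m = 1)
    {x y : Fin 4 → ℝ}
    (h0 : pdot a x = pdot a y) (h1 : pdot b x = pdot b y)
    (h2 : pdot c x = pdot c y) (h3 : pdot m x = pdot m y) : x = y := by
  set R := Matrix.of ![a,b,c,m] with hR
  have hg : R.transpose * gM ε * R = etaM :=
    frame_gram' hε2 haa hbb hcc hab hac hbc ham hbm hcm hmm
  have hinv : (R.transpose * gM ε) * (R * etaM) = 1 := by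
    calc (R.transpose * gM ε) * (R * etaM) = (R.transpose * gM ε * R) * etaM := by
          simp only [Matrix.mul_assoc]
      _ = etaM * etaM := by rw [hg]
      _ = 1 := etaM_mul_etaM
  have key : ∀ z : Fin 4 → ℝ, (R * etaM).mulVec z = fun i => pdot (![a,b,c,m] i) z := by
    intro z
    funext i
    fin_cases i <;>
      simp [hR, Matrix.mulVec, dotProduct, Matrix.mul_apply, Fin.sum_univ_four, etaM, pdot,
        Matrix.vecHead, Matrix.vecTail,
        show (Fin.succ 2 : Fin 4) = 3 from rfl, show (Fin.succ 1 : Fin 4) = 2 from rfl,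
        show (Fin.succ 0 : Fin 4) = 1 from rfl] <;> ring
  have hxy : (R * etaM).mulVec x = (R * etaM).mulVec y := by
    rw [key, key]
    funext i
    fin_cases i <;> simp [h0, h1, h2, h3]
  have hid : ∀ z : Fin 4 → ℝ, (R.transpose * gM ε).mulVec ((R * etaM).mulVec z) = z := by
    intro z
    rw [Matrix.mulVec_mulVec, hinv, Matrix.one_mulVec]
  calc x = (R.transpose * gM ε).mulVec ((R * etaM).mulVec x) := (hid x).symm
    _ = (R.transpose * gM ε).mulVec ((R * etaM).mulVec y) := by rw [hxy]
    _ = y := hid y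
end frame


lemma hasDerivAt_pdot {f g : ℝ → Fin 4 → ℝ} {f' g' : Fin 4 → ℝ} {s : ℝ}
    (hf : HasDerivAt f f' s) (hg : HasDerivAt g g' s) :
    HasDerivAt (fun t => pdot (f t) (g t)) (pdot f' (g s) + pdot (f s) g') s := by
  have hfc : ∀ i, HasDerivAt (fun t => f t i) (f' i) s := fun i => hasDerivAt_pi.mp hf i
  have hgc : ∀ i, HasDerivAt (fun t => g t i) (g' i) s := fun i => hasDerivAt_pi.mp hg i
  have h := ((((hfc 0).mul (hgc 0)).neg.sub ((hfc 1).mul (hgc 1))).add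
      ((hfc 2).mul (hgc 2))).add ((hfc 3).mul (hgc 3))
  convert h using 1
  · rfl
  · rfl
  · funext t; simp only [pdot, Pi.add_apply, Pi.sub_apply, Pi.neg_apply, Pi.mul_apply]
  simp only [pdot]; ring

lemma differentiableAt_mu {γ v₁ v₂ : ℝ → Fin 4 → ℝ} {s : ℝ}
    (hγ : DifferentiableAt ℝ γ s) (hv₁ : DifferentiableAt ℝ v₁ s)
    (hv₂ : DifferentiableAt ℝ v₂ s) :
    DifferentiableAt ℝ (muOf γ v₁ v₂) s := by
  have hγi : ∀ i, DifferentiableAt ℝ (fun t => γ t i) s := fun i =>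
    (differentiableAt_pi.mp hγ) i
  have hv₁i : ∀ i, DifferentiableAt ℝ (fun t => v₁ t i) s := fun i =>
    (differentiableAt_pi.mp hv₁) i
  have hv₂i : ∀ i, DifferentiableAt ℝ (fun t => v₂ t i) s := fun i =>
    (differentiableAt_pi.mp hv₂) i
  rw [differentiableAt_pi]
  intro i
  fin_cases i <;>
    · simp [muOf, tripleProd, det3, Matrix.vecHead, Matrix.vecTail]
      fun_prop

lemma pdot_comm (u w : Fin 4 → ℝ) : pdot u w = pdot w u := by simp only [pdot]; ring
lemma pdot_smul_right (r : ℝ) (u v : Fin 4 → ℝ) : pdot u (r • v) = r * pdot u v := by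
  simp only [pdot, Pi.smul_apply, smul_eq_mul]; ring
lemma pdot_add_right (u v w : Fin 4 → ℝ) : pdot u (v + w) = pdot u v + pdot u w := by
  simp only [pdot, Pi.add_apply]; ring

lemma pdot_triple_fst (u v w : Fin 4 → ℝ) : pdot (tripleProd u v w) u = 0 := by
  simp [pdot, tripleProd, det3]; ring
lemma pdot_triple_snd (u v w : Fin 4 → ℝ) : pdot (tripleProd u v w) v = 0 := by
  simp [pdot, tripleProd, det3]; ring
lemma pdot_triple_thd (u v w : Fin 4 → ℝ) : pdot (tripleProd u v w) w = 0 := by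
  simp [pdot, tripleProd, det3]; ring
lemma pdot_triple_self (u v w : Fin 4 → ℝ) :
    pdot (tripleProd u v w) (tripleProd u v w) =
      det3 (pdot u u) (pdot u v) (pdot u w) (pdot v u) (pdot v v) (pdot v w)
        (pdot w u) (pdot w v) (pdot w w) := by
  simp [pdot, tripleProd, det3]; ring

section frenet
variable {I : Set ℝ} {γ v₁ v₂ : ℝ → Fin 4 → ℝ} {ε : ℝ}

lemma mu_norm_on (hfr : SpacelikeFramed I γ v₁ v₂ ε) {t : ℝ} (ht : t ∈ I) :
    pdot (muOf γ v₁ v₂ t) (muOf γ v₁ v₂ t) = 1 := by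
  have hε2 : ε * ε = 1 := by rcases hfr.eps with h | h <;> rw [h] <;> norm_num
  show pdot (tripleProd (γ t) (v₁ t) (v₂ t)) (tripleProd (γ t) (v₁ t) (v₂ t)) = 1
  rw [pdot_triple_self, hfr.ads t ht, hfr.normv₁ t ht, hfr.normv₂ t ht,
    hfr.orth₁ t ht, hfr.orth₂ t ht, hfr.orth₃ t ht,
    pdot_comm (v₁ t) (γ t), pdot_comm (v₂ t) (γ t), pdot_comm (v₂ t) (v₁ t),
    hfr.orth₁ t ht, hfr.orth₂ t ht, hfr.orth₃ t ht]
  simp [det3]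
  nlinarith [hε2]

lemma sFrenet (hI : IsOpen I) (hfr : SpacelikeFramed I γ v₁ v₂ ε) {s : ℝ} (hs : s ∈ I) :
    deriv γ s = scurvA γ v₁ v₂ s • muOf γ v₁ v₂ s ∧
    deriv v₁ s = scurvL ε v₁ v₂ s • v₂ s + scurvM γ v₁ v₂ s • muOf γ v₁ v₂ s ∧
    deriv v₂ s = scurvL ε v₁ v₂ s • v₁ s + scurvN γ v₁ v₂ s • muOf γ v₁ v₂ s ∧
    deriv (muOf γ v₁ v₂) s = scurvA γ v₁ v₂ s • γ s
      + (-(ε * scurvM γ v₁ v₂ s)) • v₁ s + (ε * scurvN γ v₁ v₂ s) • v₂ s := by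
  have hε2 : ε * ε = 1 := by rcases hfr.eps with h | h <;> rw [h] <;> norm_num
  set μ := muOf γ v₁ v₂ with hμdef
  have hγd : DifferentiableAt ℝ γ s :=
    (hfr.smooth_γ.differentiableOn (by simp)).differentiableAt (hI.mem_nhds hs)
  have hv₁d : DifferentiableAt ℝ v₁ s :=
    (hfr.smooth_v₁.differentiableOn (by simp)).differentiableAt (hI.mem_nhds hs)
  have hv₂d : DifferentiableAt ℝ v₂ s :=
    (hfr.smooth_v₂.differentiableOn (by simp)).differentiableAt (hI.mem_nhds hs)
  have hμd : DifferentiableAt ℝ μ s := differentiableAt_mu hγd hv₁d hv₂d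
  -- differentiating constant pdot relations
  have key : ∀ (f g : ℝ → Fin 4 → ℝ) (c : ℝ), (∀ t ∈ I, pdot (f t) (g t) = c) →
      DifferentiableAt ℝ f s → DifferentiableAt ℝ g s →
      pdot (deriv f s) (g s) + pdot (f s) (deriv g s) = 0 := by
    intro f g c h hf hg
    have h1 := hasDerivAt_pdot hf.hasDerivAt hg.hasDerivAt
    have hev : (fun t => pdot (f t) (g t)) =ᶠ[nhds s] fun _ => c :=
      Filter.eventuallyEq_of_mem (hI.mem_nhds hs) h
    have h2 : HasDerivAt (fun t => pdot (f t) (g t)) 0 s :=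
      (hasDerivAt_const s c).congr_of_eventuallyEq hev
    exact h1.unique h2
  -- frame Gram facts at s
  have haa := hfr.ads s hs
  have hbb := hfr.normv₁ s hs
  have hcc := hfr.normv₂ s hs
  have hab := hfr.orth₁ s hs
  have hac := hfr.orth₂ s hs
  have hbc := hfr.orth₃ s hs
  have ham : pdot (γ s) (μ s) = 0 := by
    rw [pdot_comm]; exact pdot_triple_fst _ _ _
  have hbm : pdot (v₁ s) (μ s) = 0 := by
    rw [pdot_comm]; exact pdot_triple_snd _ _ _
  have hcm : pdot (v₂ s) (μ s) = 0 := by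
    rw [pdot_comm]; exact pdot_triple_thd _ _ _
  have hmm : pdot (μ s) (μ s) = 1 := mu_norm_on hfr hs
  have FI := fun {x y : Fin 4 → ℝ} h0 h1 h2 h3 =>
    frame_inj (a := γ s) (b := v₁ s) (c := v₂ s) (m := μ s) hε2
      haa hbb hcc hab hac hbc ham hbm hcm hmm (x := x) (y := y) h0 h1 h2 h3
  set α := scurvA γ v₁ v₂ s
  set l := scurvL ε v₁ v₂ s with hldef
  set m := scurvM γ v₁ v₂ s with hmdef
  set n := scurvN γ v₁ v₂ s with hndef
  -- pdot values of derivatives against frame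
  have pγγ' : pdot (γ s) (deriv γ s) = 0 := by
    have := key γ γ (-1) hfr.ads hγd hγd
    have hc := pdot_comm (deriv γ s) (γ s)
    linarith
  have pv₁γ' : pdot (v₁ s) (deriv γ s) = 0 := by
    rw [pdot_comm]; exact hfr.tangent₁ s hs
  have pv₂γ' : pdot (v₂ s) (deriv γ s) = 0 := by
    rw [pdot_comm]; exact hfr.tangent₂ s hs
  have pμγ' : pdot (μ s) (deriv γ s) = α := by
    rw [pdot_comm]; rfl
  have hγ' : deriv γ s = α • μ s := by
    apply FI
    · rw [pγγ', pdot_smul_right, ham]; ring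
    · rw [pv₁γ', pdot_smul_right, hbm]; ring
    · rw [pv₂γ', pdot_smul_right, hcm]; ring
    · rw [pμγ', pdot_smul_right, hmm]; ring
  -- v₁'
  have pγv₁' : pdot (γ s) (deriv v₁ s) = 0 := by
    have := key γ v₁ 0 hfr.orth₁ hγd hv₁d
    have h2 := hfr.tangent₁ s hs
    linarith
  have pv₁v₁' : pdot (v₁ s) (deriv v₁ s) = 0 := by
    have := key v₁ v₁ ε hfr.normv₁ hv₁d hv₁d
    have hc := pdot_comm (deriv v₁ s) (v₁ s)
    linarith
  have pdv₁v₂ : pdot (deriv v₁ s) (v₂ s) = -ε * l := by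
    rw [hldef]; show _ = -ε * (-ε * pdot (deriv v₁ s) (v₂ s))
    linear_combination (-(pdot (deriv v₁ s) (v₂ s))) * hε2
  have pv₂v₁' : pdot (v₂ s) (deriv v₁ s) = -ε * l := by
    rw [pdot_comm]; exact pdv₁v₂
  have pμv₁' : pdot (μ s) (deriv v₁ s) = m := by rw [pdot_comm]; rfl
  have hv₁' : deriv v₁ s = l • v₂ s + m • μ s := by
    apply FI
    · rw [pγv₁', pdot_add_right, pdot_smul_right, pdot_smul_right, hac, ham]; ring
    · rw [pv₁v₁', pdot_add_right, pdot_smul_right, pdot_smul_right, hbc, hbm]; ring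
    · rw [pv₂v₁', pdot_add_right, pdot_smul_right, pdot_smul_right,
        pdot_comm (v₂ s) (v₂ s), hcc, hcm]; ring
    · rw [pμv₁', pdot_add_right, pdot_smul_right, pdot_smul_right,
        pdot_comm (μ s) (v₂ s), hcm, hmm]; ring
  -- v₂'
  have pγv₂' : pdot (γ s) (deriv v₂ s) = 0 := by
    have := key γ v₂ 0 hfr.orth₂ hγd hv₂d
    have h2 := hfr.tangent₂ s hs
    linarith
  have pv₁v₂' : pdot (v₁ s) (deriv v₂ s) = ε * l := by
    have := key v₁ v₂ 0 hfr.orth₃ hv₁d hv₂d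
    linarith [pdv₁v₂]
  have pv₂v₂' : pdot (v₂ s) (deriv v₂ s) = 0 := by
    have := key v₂ v₂ (-ε) hfr.normv₂ hv₂d hv₂d
    have hc := pdot_comm (deriv v₂ s) (v₂ s)
    linarith
  have pμv₂' : pdot (μ s) (deriv v₂ s) = n := by rw [pdot_comm]; rfl
  have hv₂' : deriv v₂ s = l • v₁ s + n • μ s := by
    apply FI
    · rw [pγv₂', pdot_add_right, pdot_smul_right, pdot_smul_right, hab, ham]; ring
    · rw [pv₁v₂', pdot_add_right, pdot_smul_right, pdot_smul_right,
        pdot_comm (v₁ s) (v₁ s), hbb, hbm]; ring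
    · rw [pv₂v₂', pdot_add_right, pdot_smul_right, pdot_smul_right,
        pdot_comm (v₂ s) (v₁ s), hbc, hcm]; ring
    · rw [pμv₂', pdot_add_right, pdot_smul_right, pdot_smul_right,
        pdot_comm (μ s) (v₁ s), hbm, hmm]; ring
  -- μ'
  have hμγ : ∀ t ∈ I, pdot (μ t) (γ t) = 0 := fun t _ => pdot_triple_fst _ _ _
  have hμv₁ : ∀ t ∈ I, pdot (μ t) (v₁ t) = 0 := fun t _ => pdot_triple_snd _ _ _
  have hμv₂ : ∀ t ∈ I, pdot (μ t) (v₂ t) = 0 := fun t _ => pdot_triple_thd _ _ _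
  have hμμ : ∀ t ∈ I, pdot (μ t) (μ t) = 1 := fun t ht => mu_norm_on hfr ht
  have pγμ' : pdot (γ s) (deriv μ s) = -α := by
    have := key μ γ 0 hμγ hμd hγd
    have hc := pdot_comm (deriv μ s) (γ s)
    have h2 : pdot (μ s) (deriv γ s) = α := pμγ'
    linarith
  have pv₁μ' : pdot (v₁ s) (deriv μ s) = -m := by
    have := key μ v₁ 0 hμv₁ hμd hv₁d
    have hc := pdot_comm (deriv μ s) (v₁ s)
    have h2 : pdot (μ s) (deriv v₁ s) = m := pμv₁'
    linarith
  have pv₂μ' : pdot (v₂ s) (deriv μ s) = -n := by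
    have := key μ v₂ 0 hμv₂ hμd hv₂d
    have hc := pdot_comm (deriv μ s) (v₂ s)
    have h2 : pdot (μ s) (deriv v₂ s) = n := pμv₂'
    linarith
  have pμμ' : pdot (μ s) (deriv μ s) = 0 := by
    have := key μ μ 1 hμμ hμd hμd
    have hc := pdot_comm (deriv μ s) (μ s)
    linarith
  have hμ' : deriv μ s = α • γ s + (-(ε * m)) • v₁ s + (ε * n) • v₂ s := by
    apply FI
    · rw [pγμ', pdot_add_right, pdot_add_right, pdot_smul_right, pdot_smul_right,
        pdot_smul_right, haa, hab, hac]; ring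
    · rw [pv₁μ', pdot_add_right, pdot_add_right, pdot_smul_right, pdot_smul_right,
        pdot_smul_right, pdot_comm (v₁ s) (γ s), hab, hbb, hbc]
      linear_combination m * hε2
    · rw [pv₂μ', pdot_add_right, pdot_add_right, pdot_smul_right, pdot_smul_right,
        pdot_smul_right, pdot_comm (v₂ s) (γ s), hac, pdot_comm (v₂ s) (v₁ s), hbc, hcc]
      linear_combination n * hε2
    · rw [pμμ', pdot_add_right, pdot_add_right, pdot_smul_right, pdot_smul_right,
        pdot_smul_right, pdot_comm (μ s) (γ s), pdot_comm (μ s) (v₁ s),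
        pdot_comm (μ s) (v₂ s), ham, hbm, hcm]; ring
  exact ⟨hγ', hv₁', hv₂', hμ'⟩
end frenet

open Matrix in
lemma det4_expand {R : Type*} [CommRing R] (M : Matrix (Fin 4) (Fin 4) R) : M.det =
    M 0 0 * (M 1 1 * (M 2 2 * M 3 3 - M 2 3 * M 3 2) - M 1 2 * (M 2 1 * M 3 3 - M 2 3 * M 3 1)
      + M 1 3 * (M 2 1 * M 3 2 - M 2 2 * M 3 1))
    - M 0 1 * (M 1 0 * (M 2 2 * M 3 3 - M 2 3 * M 3 2) - M 1 2 * (M 2 0 * M 3 3 - M 2 3 * M 3 0)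
      + M 1 3 * (M 2 0 * M 3 2 - M 2 2 * M 3 0))
    + M 0 2 * (M 1 0 * (M 2 1 * M 3 3 - M 2 3 * M 3 1) - M 1 1 * (M 2 0 * M 3 3 - M 2 3 * M 3 0)
      + M 1 3 * (M 2 0 * M 3 1 - M 2 1 * M 3 0))
    - M 0 3 * (M 1 0 * (M 2 1 * M 3 2 - M 2 2 * M 3 1) - M 1 1 * (M 2 0 * M 3 2 - M 2 2 * M 3 0)
      + M 1 2 * (M 2 0 * M 3 1 - M 2 1 * M 3 0)) := by
  simp only [det_succ_row_zero, Fin.sum_univ_succ, det_fin_three, submatrix_apply,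
    Fin.zero_succAbove, Fin.succ_succAbove_zero, Fin.succ_succAbove_one,
    Fin.succ_zero_eq_one, Fin.succ_one_eq_two, Finset.univ_unique, Finset.sum_singleton,
    Fin.default_eq_zero, Fin.val_zero, Fin.val_succ, Fin.val_eq_zero, pow_succ, pow_zero,
    show (Fin.succ 2 : Fin 4) = 3 from rfl, det_unique, Fin.succ_succAbove_succ,
    show ((1:Fin 4).succAbove 2) = 3 from rfl, show ((2:Fin 4).succAbove 2) = 3 from rfl,
    show ((3:Fin 4).succAbove 2) = 2 from rfl]
  ring

lemma det_frame (u v w : Fin 4 → ℝ) :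
    (Matrix.of ![u, v, w, tripleProd u v w]).det
      = -(pdot (tripleProd u v w) (tripleProd u v w)) := by
  rw [det4_expand]
  simp [pdot, tripleProd, det3, Matrix.vecHead, Matrix.vecTail]
  ring


theorem uniqueness_of_spacelike_framed_curves
    (I : Set ℝ) (hI : IsOpen I) (hIc : I.OrdConnected)
    (γ v₁ v₂ δ u₁ u₂ : ℝ → Fin 4 → ℝ) (ε : ℝ)
    (hfr : SpacelikeFramed I γ v₁ v₂ ε)
    (hfr' : SpacelikeFramed I δ u₁ u₂ ε)
    (hA : ∀ s ∈ I, scurvA γ v₁ v₂ s = scurvA δ u₁ u₂ s)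
    (hL : ∀ s ∈ I, scurvL ε v₁ v₂ s = scurvL ε u₁ u₂ s)
    (hM : ∀ s ∈ I, scurvM γ v₁ v₂ s = scurvM δ u₁ u₂ s)
    (hN : ∀ s ∈ I, scurvN γ v₁ v₂ s = scurvN δ u₁ u₂ s) :
    ∃ A : Matrix (Fin 4) (Fin 4) ℝ,
      A.transpose * Matrix.diagonal ![(-1 : ℝ), -1, 1, 1] * A
          = Matrix.diagonal ![(-1 : ℝ), -1, 1, 1] ∧
      A.det = 1 ∧
      ∀ s ∈ I, δ s = A.mulVec (γ s) ∧ u₁ s = A.mulVec (v₁ s) ∧ u₂ s = A.mulVec (v₂ s) := by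
  rw [← etaM_eq_diagonal]
  have hε2 : ε * ε = 1 := by rcases hfr.eps with h | h <;> rw [h] <;> norm_num
  rcases I.eq_empty_or_nonempty with hIe | ⟨s₀, hs₀⟩
  · refine ⟨1, by simp [Matrix.transpose_one], Matrix.det_one, ?_⟩
    intro s hs; rw [hIe] at hs; exact absurd hs (Set.notMem_empty s)
  set μ := muOf γ v₁ v₂ with hμdef
  set ν := muOf δ u₁ u₂ with hνdef
  set Aof : ℝ → Fin 4 → Fin 4 → ℝ := fun t i j => ![(-1 : ℝ), -1, 1, 1] j *
      (-(δ t i * γ t j) + ε * (u₁ t i * v₁ t j) - ε * (u₂ t i * v₂ t j) + ν t i * μ t j)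
    with hAof
  -- each entry has zero derivative on I
  have hderiv : ∀ s ∈ I, ∀ i j : Fin 4, HasDerivAt (fun t => Aof t i j) 0 s := by
    intro s hs i j
    obtain ⟨hFγ, hFv₁, hFv₂, hFμ⟩ := sFrenet hI hfr hs
    obtain ⟨hFδ, hFu₁, hFu₂, hFν⟩ := sFrenet hI hfr' hs
    rw [← hA s hs] at hFδ hFν
    rw [← hL s hs] at hFu₁ hFu₂
    rw [← hM s hs] at hFu₁ hFν
    rw [← hN s hs] at hFu₂ hFν
    set a := scurvA γ v₁ v₂ s
    set l := scurvL ε v₁ v₂ s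
    set m := scurvM γ v₁ v₂ s
    set n := scurvN γ v₁ v₂ s
    have hγd : DifferentiableAt ℝ γ s :=
      (hfr.smooth_γ.differentiableOn (by simp)).differentiableAt (hI.mem_nhds hs)
    have hv₁d : DifferentiableAt ℝ v₁ s :=
      (hfr.smooth_v₁.differentiableOn (by simp)).differentiableAt (hI.mem_nhds hs)
    have hv₂d : DifferentiableAt ℝ v₂ s :=
      (hfr.smooth_v₂.differentiableOn (by simp)).differentiableAt (hI.mem_nhds hs)
    have hδd : DifferentiableAt ℝ δ s :=
      (hfr'.smooth_γ.differentiableOn (by simp)).differentiableAt (hI.mem_nhds hs)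
    have hu₁d : DifferentiableAt ℝ u₁ s :=
      (hfr'.smooth_v₁.differentiableOn (by simp)).differentiableAt (hI.mem_nhds hs)
    have hu₂d : DifferentiableAt ℝ u₂ s :=
      (hfr'.smooth_v₂.differentiableOn (by simp)).differentiableAt (hI.mem_nhds hs)
    have Hγ : HasDerivAt γ (a • μ s) s := hFγ ▸ hγd.hasDerivAt
    have Hv₁ : HasDerivAt v₁ (l • v₂ s + m • μ s) s := hFv₁ ▸ hv₁d.hasDerivAt
    have Hv₂ : HasDerivAt v₂ (l • v₁ s + n • μ s) s := hFv₂ ▸ hv₂d.hasDerivAt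
    have Hμ : HasDerivAt μ (a • γ s + (-(ε * m)) • v₁ s + (ε * n) • v₂ s) s :=
      hFμ ▸ (differentiableAt_mu hγd hv₁d hv₂d).hasDerivAt
    have Hδ : HasDerivAt δ (a • ν s) s := hFδ ▸ hδd.hasDerivAt
    have Hu₁ : HasDerivAt u₁ (l • u₂ s + m • ν s) s := hFu₁ ▸ hu₁d.hasDerivAt
    have Hu₂ : HasDerivAt u₂ (l • u₁ s + n • ν s) s := hFu₂ ▸ hu₂d.hasDerivAt
    have Hν : HasDerivAt ν (a • δ s + (-(ε * m)) • u₁ s + (ε * n) • u₂ s) s :=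
      hFν ▸ (differentiableAt_mu hδd hu₁d hu₂d).hasDerivAt
    have hγj := hasDerivAt_pi.mp Hγ j
    have hv₁j := hasDerivAt_pi.mp Hv₁ j
    have hv₂j := hasDerivAt_pi.mp Hv₂ j
    have hμj := hasDerivAt_pi.mp Hμ j
    have hδi := hasDerivAt_pi.mp Hδ i
    have hu₁i := hasDerivAt_pi.mp Hu₁ i
    have hu₂i := hasDerivAt_pi.mp Hu₂ i
    have hνi := hasDerivAt_pi.mp Hν i
    have hP := ((((hδi.mul hγj).neg.add ((hu₁i.mul hv₁j).const_mul ε)).sub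
        ((hu₂i.mul hv₂j).const_mul ε)).add (hνi.mul hμj)).const_mul (![(-1 : ℝ), -1, 1, 1] j)
    convert hP using 1
    · rfl
    · rfl
    · rfl
    simp only [Pi.add_apply, Pi.smul_apply, smul_eq_mul, Pi.neg_apply]
    ring
  -- entries are constant on I
  have hconst : ∀ s ∈ I, ∀ i j : Fin 4, Aof s i j = Aof s₀ i j := by
    intro s hs i j
    have hIcc : ∀ p q : ℝ, p ∈ I → q ∈ I → Set.Icc p q ⊆ I := fun p q hp hq => hIc.out hp hq
    have main : ∀ p q : ℝ, p ∈ I → q ∈ I → p ≤ q → Aof q i j = Aof p i j := by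
      intro p q hp hq hpq
      have hsub := hIcc p q hp hq
      have hcont : ContinuousOn (fun t => Aof t i j) (Set.Icc p q) := fun x hx =>
        ((hderiv x (hsub hx) i j).continuousAt).continuousWithinAt
      have hd : ∀ x ∈ Set.Ico p q, HasDerivWithinAt (fun t => Aof t i j) 0 (Set.Ici x) x :=
        fun x hx => ((hderiv x (hsub (Set.Ico_subset_Icc_self hx)) i j)).hasDerivWithinAt
      exact constant_of_has_deriv_right_zero hcont hd q ⟨hpq, le_refl q⟩
    rcases le_total s s₀ with h | h
    · exact (main s s₀ hs hs₀ h).symm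
    · exact main s₀ s hs₀ hs h
  -- the constant matrix
  set A₀ : Matrix (Fin 4) (Fin 4) ℝ := Matrix.of (fun i j => Aof s₀ i j) with hA₀
  -- Gram facts at a point t ∈ I, for both frames
  have gram : ∀ t ∈ I, (Matrix.of ![γ t, v₁ t, v₂ t, μ t]) * etaM *
      (Matrix.of ![γ t, v₁ t, v₂ t, μ t]).transpose = gM ε := by
    intro t ht
    refine frame_gram (hfr.ads t ht) (hfr.normv₁ t ht) (hfr.normv₂ t ht) (hfr.orth₁ t ht)
      (hfr.orth₂ t ht) (hfr.orth₃ t ht) ?_ ?_ ?_ (mu_norm_on hfr ht)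
    · rw [pdot_comm]; exact pdot_triple_fst _ _ _
    · rw [pdot_comm]; exact pdot_triple_snd _ _ _
    · rw [pdot_comm]; exact pdot_triple_thd _ _ _
  have gram' : ∀ t ∈ I, (Matrix.of ![δ t, u₁ t, u₂ t, ν t]) * etaM *
      (Matrix.of ![δ t, u₁ t, u₂ t, ν t]).transpose = gM ε := by
    intro t ht
    refine frame_gram (hfr'.ads t ht) (hfr'.normv₁ t ht) (hfr'.normv₂ t ht) (hfr'.orth₁ t ht)
      (hfr'.orth₂ t ht) (hfr'.orth₃ t ht) ?_ ?_ ?_ (mu_norm_on hfr' ht)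
    · rw [pdot_comm]; exact pdot_triple_fst _ _ _
    · rw [pdot_comm]; exact pdot_triple_snd _ _ _
    · rw [pdot_comm]; exact pdot_triple_thd _ _ _
  have gramE : ∀ t ∈ I, (Matrix.of ![γ t, v₁ t, v₂ t, μ t]).transpose * gM ε *
      (Matrix.of ![γ t, v₁ t, v₂ t, μ t]) = etaM := by
    intro t ht
    refine frame_gram' hε2 (hfr.ads t ht) (hfr.normv₁ t ht) (hfr.normv₂ t ht) (hfr.orth₁ t ht)
      (hfr.orth₂ t ht) (hfr.orth₃ t ht) ?_ ?_ ?_ (mu_norm_on hfr ht)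
    · rw [pdot_comm]; exact pdot_triple_fst _ _ _
    · rw [pdot_comm]; exact pdot_triple_snd _ _ _
    · rw [pdot_comm]; exact pdot_triple_thd _ _ _
  -- A₀ in matrix form
  set R : Matrix (Fin 4) (Fin 4) ℝ := Matrix.of ![γ s₀, v₁ s₀, v₂ s₀, μ s₀] with hR
  set R' : Matrix (Fin 4) (Fin 4) ℝ := Matrix.of ![δ s₀, u₁ s₀, u₂ s₀, ν s₀] with hR'
  have hA0eq : A₀ = R'.transpose * gM ε * R * etaM := by
    ext i j
    fin_cases j <;>
      simp [hA₀, hAof, hR, hR', Matrix.mul_apply, Fin.sum_univ_four, etaM, gM,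
        Matrix.vecHead, Matrix.vecTail] <;> ring
  have hRGram := gram s₀ hs₀
  have hR'Gram := gram' s₀ hs₀
  have hRE := gramE s₀ hs₀
  have hGG := gM_mul_gM hε2
  have hEE := etaM_mul_etaM
  have hAT : A₀.transpose = etaM * R.transpose * gM ε * R' := by
    rw [hA0eq]
    simp [Matrix.transpose_mul, etaM_transpose, gM_transpose, Matrix.mul_assoc]
  -- orthogonality
  have horth : A₀.transpose * etaM * A₀ = etaM := by
    rw [hAT, hA0eq]
    calc etaM * R.transpose * gM ε * R' * etaM * (R'.transpose * gM ε * R * etaM)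
        = etaM * R.transpose * gM ε * (R' * etaM * R'.transpose) * gM ε * R * etaM := by
          simp only [Matrix.mul_assoc]
      _ = etaM * R.transpose * gM ε * gM ε * gM ε * R * etaM := by rw [hR'Gram]
      _ = etaM * R.transpose * (gM ε * gM ε) * (gM ε * R) * etaM := by
          simp only [Matrix.mul_assoc]
      _ = etaM * R.transpose * (gM ε * R) * etaM := by rw [hGG, Matrix.mul_one]
      _ = etaM * (R.transpose * gM ε * R) * etaM := by simp only [Matrix.mul_assoc]
      _ = etaM * etaM * etaM := by rw [hRE]
      _ = etaM := by rw [hEE, Matrix.one_mul]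
  -- determinant
  have hdetR : R.det = -1 := by
    have h : R.det = -(pdot (μ s₀) (μ s₀)) := det_frame (γ s₀) (v₁ s₀) (v₂ s₀)
    rw [h, mu_norm_on hfr hs₀]
  have hdetR' : R'.det = -1 := by
    have h : R'.det = -(pdot (ν s₀) (ν s₀)) := det_frame (δ s₀) (u₁ s₀) (u₂ s₀)
    rw [h, mu_norm_on hfr' hs₀]
  have hdet : A₀.det = 1 := by
    rw [hA0eq]
    rw [Matrix.det_mul, Matrix.det_mul, Matrix.det_mul, Matrix.det_transpose,
      hdetR, hdetR', etaM_det, gM_det hε2]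
    norm_num
  -- the mapping property at each point of I
  refine ⟨A₀, horth, hdet, ?_⟩
  intro s hs
  have haa := hfr.ads s hs
  have hbb := hfr.normv₁ s hs
  have hcc := hfr.normv₂ s hs
  have hab := hfr.orth₁ s hs
  have hac := hfr.orth₂ s hs
  have hbc := hfr.orth₃ s hs
  have ham : pdot (μ s) (γ s) = 0 := pdot_triple_fst _ _ _
  have hbm : pdot (μ s) (v₁ s) = 0 := pdot_triple_snd _ _ _
  have hcm : pdot (μ s) (v₂ s) = 0 := pdot_triple_thd _ _ _
  simp only [pdot] at haa hbb hcc hab hac hbc ham hbm hcm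
  have hmv : ∀ x : Fin 4 → ℝ, A₀.mulVec x = fun i => ∑ j : Fin 4, Aof s i j * x j := by
    intro x
    funext i
    show ∑ j : Fin 4, Aof s₀ i j * x j = _
    exact Finset.sum_congr rfl fun j _ => by rw [hconst s hs i j]
  refine ⟨?_, ?_, ?_⟩
  · funext i
    rw [hmv]
    simp only [hAof]
    simp [Fin.sum_univ_four, Matrix.vecHead, Matrix.vecTail,
      show (Fin.succ 2 : Fin 4) = 3 from rfl, show (Fin.succ 1 : Fin 4) = 2 from rfl,
      show (Fin.succ 0 : Fin 4) = 1 from rfl]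
    linear_combination (δ s i) * haa - (ε * u₁ s i) * hab + (ε * u₂ s i) * hac - (ν s i) * ham
  · funext i
    rw [hmv]
    simp only [hAof]
    simp [Fin.sum_univ_four, Matrix.vecHead, Matrix.vecTail,
      show (Fin.succ 2 : Fin 4) = 3 from rfl, show (Fin.succ 1 : Fin 4) = 2 from rfl,
      show (Fin.succ 0 : Fin 4) = 1 from rfl]
    linear_combination (δ s i) * hab - (ε * u₁ s i) * hbb + (ε * u₂ s i) * hbc
      - (ν s i) * hbm - (u₁ s i) * hε2
  · funext i
    rw [hmv]
    simp only [hAof]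
    simp [Fin.sum_univ_four, Matrix.vecHead, Matrix.vecTail,
      show (Fin.succ 2 : Fin 4) = 3 from rfl, show (Fin.succ 1 : Fin 4) = 2 from rfl,
      show (Fin.succ 0 : Fin 4) = 1 from rfl]
    linear_combination (δ s i) * hac - (ε * u₁ s i) * hbc + (ε * u₂ s i) * hcc
      - (ν s i) * hcm - (u₂ s i) * hε2
end
end

section
/- Let (γ,f₁,f₂) be a pseudo-spherical spacelike framed immersion on I whose curvature has the form (α,ℓ̂,0,n̂), satisfying α²(s)+ε̂n̂²(s) ≠ 0 and g(s) ≠ 0 for all s, and let u : Ĩ → I be a change of parameter. Then (γ∘u, f₁∘u, f₂∘u) is a pseudo-spherical spacelike framed immersion whose curvature also has vanishing third component and satisfies the corresponding nondegeneracy conditions, and its total evolute (with the + sign choice) satisfies E(γ∘u)(s) = E(γ)(u(s)) for all s ∈ Ĩ; i.e., the total evolute is independent of the parametrization. -/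
noncomputable section

section Helpers

lemma pdot_smul_left (a : ℝ) (v w : Fin 4 → ℝ) : pdot (a • v) w = a * pdot v w := by
  simp [pdot, Pi.smul_apply, smul_eq_mul]; ring

set_option maxHeartbeats 1000000 in
lemma diffAt_pdot_triple {f g₁ g₂ g₃ : ℝ → Fin 4 → ℝ} {s : ℝ}
    (hf : DifferentiableAt ℝ f s) (h1 : DifferentiableAt ℝ g₁ s)
    (h2 : DifferentiableAt ℝ g₂ s) (h3 : DifferentiableAt ℝ g₃ s) :
    DifferentiableAt ℝ (fun s => pdot (f s) (tripleProd (g₁ s) (g₂ s) (g₃ s))) s := by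
  simp only [pdot, tripleProd, det3, Matrix.cons_val_zero, Matrix.cons_val_one,
    Matrix.head_cons, Matrix.cons_val_two, Matrix.tail_cons, Matrix.cons_val_three]
  fun_prop

end Helpers

theorem spacelike_evolute_independent_of_parametrization
    (I : Set ℝ) (hI : IsOpen I) (hIc : I.OrdConnected)
    (γ f₁ f₂ : ℝ → Fin 4 → ℝ) (εh : ℝ)
    (hfr : SpacelikeFramed I γ f₁ f₂ εh)
    (α ℓh nh : ℝ → ℝ)
    (hA : ∀ s ∈ I, α s = scurvA γ f₁ f₂ s)
    (hL : ∀ s ∈ I, ℓh s = scurvL εh f₁ f₂ s)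
    (hM0 : ∀ s ∈ I, scurvM γ f₁ f₂ s = 0)
    (hN : ∀ s ∈ I, nh s = scurvN γ f₁ f₂ s)
    (himm : ∀ s ∈ I, ¬(α s = 0 ∧ ℓh s = 0 ∧ nh s = 0))
    (hnd : ∀ s ∈ I, (α s) ^ 2 + εh * (nh s) ^ 2 ≠ 0)
    (hg : ∀ s ∈ I, sG α ℓh nh εh s ≠ 0)
    (J : Set ℝ) (hJ : IsOpen J) (hJc : J.OrdConnected)
    (u : ℝ → ℝ) (hu : ContDiffOn ℝ (⊤ : ℕ∞) u J)
    (humaps : Set.MapsTo u J I) (husurj : Set.SurjOn u J I)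
    (hu' : ∀ t ∈ J, 0 < deriv u t)
    (αu ℓu nu : ℝ → ℝ)
    (hαu : ∀ t ∈ J, αu t = scurvA (γ ∘ u) (f₁ ∘ u) (f₂ ∘ u) t)
    (hℓu : ∀ t ∈ J, ℓu t = scurvL εh (f₁ ∘ u) (f₂ ∘ u) t)
    (hnu : ∀ t ∈ J, nu t = scurvN (γ ∘ u) (f₁ ∘ u) (f₂ ∘ u) t) :
    SpacelikeFramed J (γ ∘ u) (f₁ ∘ u) (f₂ ∘ u) εh ∧
    (∀ t ∈ J, scurvM (γ ∘ u) (f₁ ∘ u) (f₂ ∘ u) t = 0) ∧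
    (∀ t ∈ J, ¬(αu t = 0 ∧ ℓu t = 0 ∧ nu t = 0)) ∧
    (∀ t ∈ J, (αu t) ^ 2 + εh * (nu t) ^ 2 ≠ 0) ∧
    (∀ t ∈ J, sG αu ℓu nu εh t ≠ 0) ∧
    (∀ t ∈ J, sEvolute (γ ∘ u) (f₁ ∘ u) (f₂ ∘ u) αu ℓu nu εh t
        = sEvolute γ f₁ f₂ α ℓh nh εh (u t)) := by
  classical
  have hsub : J ⊆ u ⁻¹' I := fun x hx => humaps hx
  have dut : ∀ t ∈ J, DifferentiableAt ℝ u t := fun t ht =>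
    (hu.contDiffAt (hJ.mem_nhds ht)).differentiableAt (by simp)
  have hdu : ContDiffOn ℝ (⊤ : ℕ∞) (deriv u) J := hu.deriv_of_isOpen hJ (by simp)
  have ddu : ∀ t ∈ J, DifferentiableAt ℝ (deriv u) t := fun t ht =>
    (hdu.contDiffAt (hJ.mem_nhds ht)).differentiableAt (by simp)
  have dAt : ∀ (f : ℝ → Fin 4 → ℝ), ContDiffOn ℝ (⊤ : ℕ∞) f I → ∀ s ∈ I, DifferentiableAt ℝ f s :=
    fun f hf s hs => (hf.contDiffAt (hI.mem_nhds hs)).differentiableAt (by simp)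
  have dAt' : ∀ (f : ℝ → Fin 4 → ℝ), ContDiffOn ℝ (⊤ : ℕ∞) f I → ∀ s ∈ I,
      DifferentiableAt ℝ (deriv f) s :=
    fun f hf s hs => dAt _ (hf.deriv_of_isOpen hI (by simp)) s hs
  have chain : ∀ (f : ℝ → Fin 4 → ℝ), ContDiffOn ℝ (⊤ : ℕ∞) f I → ∀ t ∈ J,
      deriv (f ∘ u) t = deriv u t • deriv f (u t) := fun f hf t ht =>
    deriv.scomp t (dAt f hf (u t) (humaps ht)) (dut t ht)
  have hmu : ∀ t : ℝ, muOf (γ ∘ u) (f₁ ∘ u) (f₂ ∘ u) t = muOf γ f₁ f₂ (u t) := fun _ => rfl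
  have hAu : ∀ t ∈ J, scurvA (γ ∘ u) (f₁ ∘ u) (f₂ ∘ u) t
      = deriv u t * scurvA γ f₁ f₂ (u t) := by
    intro t ht
    rw [scurvA, scurvA, hmu t, chain γ hfr.smooth_γ t ht, pdot_smul_left]
  have hLu : ∀ t ∈ J, scurvL εh (f₁ ∘ u) (f₂ ∘ u) t
      = deriv u t * scurvL εh f₁ f₂ (u t) := by
    intro t ht
    rw [scurvL, scurvL, chain f₁ hfr.smooth_v₁ t ht, Function.comp_apply, pdot_smul_left]
    ring
  have hMu : ∀ t ∈ J, scurvM (γ ∘ u) (f₁ ∘ u) (f₂ ∘ u) t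
      = deriv u t * scurvM γ f₁ f₂ (u t) := by
    intro t ht
    rw [scurvM, scurvM, hmu t, chain f₁ hfr.smooth_v₁ t ht, pdot_smul_left]
  have hNu : ∀ t ∈ J, scurvN (γ ∘ u) (f₁ ∘ u) (f₂ ∘ u) t
      = deriv u t * scurvN γ f₁ f₂ (u t) := by
    intro t ht
    rw [scurvN, scurvN, hmu t, chain f₂ hfr.smooth_v₂ t ht, pdot_smul_left]
  have hαu' : ∀ t ∈ J, αu t = deriv u t * α (u t) := fun t ht => by
    rw [hαu t ht, hAu t ht, hA (u t) (humaps ht)]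
  have hℓu' : ∀ t ∈ J, ℓu t = deriv u t * ℓh (u t) := fun t ht => by
    rw [hℓu t ht, hLu t ht, hL (u t) (humaps ht)]
  have hnu' : ∀ t ∈ J, nu t = deriv u t * nh (u t) := fun t ht => by
    rw [hnu t ht, hNu t ht, hN (u t) (humaps ht)]
  have frJ : SpacelikeFramed J (γ ∘ u) (f₁ ∘ u) (f₂ ∘ u) εh :=
    { smooth_γ := hfr.smooth_γ.comp hu hsub
      smooth_v₁ := hfr.smooth_v₁.comp hu hsub
      smooth_v₂ := hfr.smooth_v₂.comp hu hsub
      eps := hfr.eps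
      ads := fun t ht => hfr.ads (u t) (humaps ht)
      normv₁ := fun t ht => hfr.normv₁ (u t) (humaps ht)
      normv₂ := fun t ht => hfr.normv₂ (u t) (humaps ht)
      orth₁ := fun t ht => hfr.orth₁ (u t) (humaps ht)
      orth₂ := fun t ht => hfr.orth₂ (u t) (humaps ht)
      orth₃ := fun t ht => hfr.orth₃ (u t) (humaps ht)
      tangent₁ := fun t ht => by
        rw [chain γ hfr.smooth_γ t ht, Function.comp_apply, pdot_smul_left,
          hfr.tangent₁ (u t) (humaps ht), mul_zero]
      tangent₂ := fun t ht => by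
        rw [chain γ hfr.smooth_γ t ht, Function.comp_apply, pdot_smul_left,
          hfr.tangent₂ (u t) (humaps ht), mul_zero] }
  refine ⟨frJ, ?_, ?_, ?_, ?_, ?_⟩
  · intro t ht
    rw [hMu t ht, hM0 (u t) (humaps ht), mul_zero]
  · intro t ht h
    have hw0 : deriv u t ≠ 0 := ne_of_gt (hu' t ht)
    refine himm (u t) (humaps ht) ⟨?_, ?_, ?_⟩
    · have := h.1; rw [hαu' t ht] at this
      exact (mul_eq_zero.mp this).resolve_left hw0
    · have := h.2.1; rw [hℓu' t ht] at this
      exact (mul_eq_zero.mp this).resolve_left hw0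
    · have := h.2.2; rw [hnu' t ht] at this
      exact (mul_eq_zero.mp this).resolve_left hw0
  · intro t ht
    have hw0 : deriv u t ≠ 0 := ne_of_gt (hu' t ht)
    rw [hαu' t ht, hnu' t ht]
    have : (deriv u t * α (u t)) ^ 2 + εh * (deriv u t * nh (u t)) ^ 2
        = (deriv u t) ^ 2 * ((α (u t)) ^ 2 + εh * (nh (u t)) ^ 2) := by ring
    rw [this]
    exact mul_ne_zero (pow_ne_zero 2 hw0) (hnd (u t) (humaps ht))
  all_goals
  · -- shared setup for the sG and evolute goals
    have dαAt : ∀ t ∈ J, DifferentiableAt ℝ α (u t) := by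
      intro t ht
      have hut : u t ∈ I := humaps ht
      have heA : α =ᶠ[nhds (u t)] scurvA γ f₁ f₂ :=
        Filter.eventuallyEq_of_mem (hI.mem_nhds hut) hA
      refine heA.differentiableAt_iff.mpr ?_
      exact diffAt_pdot_triple (dAt' γ hfr.smooth_γ (u t) hut) (dAt γ hfr.smooth_γ (u t) hut)
        (dAt f₁ hfr.smooth_v₁ (u t) hut) (dAt f₂ hfr.smooth_v₂ (u t) hut)
    have dnAt : ∀ t ∈ J, DifferentiableAt ℝ nh (u t) := by
      intro t ht
      have hut : u t ∈ I := humaps ht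
      have heN : nh =ᶠ[nhds (u t)] scurvN γ f₁ f₂ :=
        Filter.eventuallyEq_of_mem (hI.mem_nhds hut) hN
      refine heN.differentiableAt_iff.mpr ?_
      exact diffAt_pdot_triple (dAt' f₂ hfr.smooth_v₂ (u t) hut) (dAt γ hfr.smooth_γ (u t) hut)
        (dAt f₁ hfr.smooth_v₁ (u t) hut) (dAt f₂ hfr.smooth_v₂ (u t) hut)
    have hDα : ∀ t ∈ J, deriv αu t = deriv (deriv u) t * α (u t)
        + deriv u t * (deriv α (u t) * deriv u t) := by
      intro t ht
      have heq : αu =ᶠ[nhds t] fun r => deriv u r * α (u r) :=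
        Filter.eventuallyEq_of_mem (hJ.mem_nhds ht) hαu'
      have h2 : deriv (fun r => α (u r)) t = deriv α (u t) * deriv u t :=
        deriv_comp t (dαAt t ht) (dut t ht)
      have dcomp : DifferentiableAt ℝ (fun r => α (u r)) t := (dαAt t ht).comp t (dut t ht)
      rw [heq.deriv_eq, deriv_fun_mul (ddu t ht) dcomp, h2]
    have hDn : ∀ t ∈ J, deriv nu t = deriv (deriv u) t * nh (u t)
        + deriv u t * (deriv nh (u t) * deriv u t) := by
      intro t ht
      have heq : nu =ᶠ[nhds t] fun r => deriv u r * nh (u r) :=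
        Filter.eventuallyEq_of_mem (hJ.mem_nhds ht) hnu'
      have h2 : deriv (fun r => nh (u r)) t = deriv nh (u t) * deriv u t :=
        deriv_comp t (dnAt t ht) (dut t ht)
      have dcomp : DifferentiableAt ℝ (fun r => nh (u r)) t := (dnAt t ht).comp t (dut t ht)
      rw [heq.deriv_eq, deriv_fun_mul (ddu t ht) dcomp, h2]
    have key : ∀ t ∈ J,
        sG αu ℓu nu εh t = (deriv u t) ^ 6 * sG α ℓh nh εh (u t) := by
      intro t ht
      rw [sG, sG, hαu' t ht, hℓu' t ht, hnu' t ht, hDα t ht, hDn t ht]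
      ring
    first
    | -- sG nonvanishing
      exact fun t ht => by
        rw [key t ht]
        exact mul_ne_zero (pow_ne_zero 6 (ne_of_gt (hu' t ht))) (hg (u t) (humaps ht))
    | -- evolute equality
      intro t ht
      have hut : u t ∈ I := humaps ht
      have hwpos : (0:ℝ) < deriv u t := hu' t ht
      have hw0 : deriv u t ≠ 0 := ne_of_gt hwpos
      have hG := key t ht
      have hS : Real.sqrt |sG αu ℓu nu εh t|
          = (deriv u t) ^ 3 * Real.sqrt |sG α ℓh nh εh (u t)| := by
        rw [hG, abs_mul, abs_pow, abs_of_pos hwpos,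
          show (deriv u t) ^ 6 = ((deriv u t) ^ 3) ^ 2 by ring,
          Real.sqrt_mul (sq_nonneg _), Real.sqrt_sq (by positivity)]
      have hSpos : 0 < Real.sqrt |sG α ℓh nh εh (u t)| :=
        Real.sqrt_pos.mpr (abs_pos.mpr (hg (u t) hut))
      rw [sEvolute, sEvolute, hS, hαu' t ht, hℓu' t ht, hnu' t ht,
        hDα t ht, hDn t ht]
      funext i
      simp only [Pi.smul_apply, Pi.sub_apply, smul_eq_mul, Function.comp_apply]
      rw [mul_inv]
      field_simp
      ring
end
end
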